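/- arXiv:2305.02439 — 3 statements merged into one kernel-verified Lean document; each statement's English description precedes it below -/
import Mathlib

section
/- Let (m̃_M)_{M∈ℕ} be random variables with 0 ≤ m̃_M ≤ M almost surely, E[m̃_M] = Θ(M) (i.e. there exist constants 0 < c₁ ≤ c₂ with c₁M ≤ E[m̃_M] ≤ c₂M for large M), and Var(m̃_M) = O(M). Let ε_M = M^{5/6}. Then lim_{M→∞} E[M/(m̃_M + ε_M)] = lim_{M→∞} M/E[m̃_M], provided the latter limit exists. -/
/-!
Expanding `t ↦ (t + ε)⁻¹` to first order around the mean `b = E[X]` gives the exact identity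
`E[(X + ε)⁻¹] = (b + ε)⁻¹ + E[(X - b)² / (X + ε)] / (b + ε)²`, since the linear term has mean
zero. For `X ≥ 0` the remainder lies between `0` and `Var X / ε`, so
`|E[M / (X + ε)] - M / b| ≤ M (Var X / ε + ε) / b²`. With `b ≥ c₁ M`, `Var X ≤ C M` and
`ε = M^{5/6}` this is at most `(C M^{-5/6} + M^{-1/6}) / c₁²`, which tends to `0`
(any `ε → ∞` with `ε = o(M)` would do).
-/

open Filter Topology MeasureTheory ProbabilityTheory

lemma inv_add_eq_taylor {x b ε : ℝ} (hx : x + ε ≠ 0) (hb : b + ε ≠ 0) :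
    (x + ε)⁻¹ = (b + ε)⁻¹ - (x - b) / (b + ε) ^ 2 + (x - b) ^ 2 / (x + ε) / (b + ε) ^ 2 := by
  field_simp
  ring

section InverseMoment

variable {Ω : Type*} [MeasurableSpace Ω] {μ : Measure Ω} [IsProbabilityMeasure μ]
  {X : Ω → ℝ} {ε : ℝ}

lemma integral_inv_add_eq (hX : MemLp X 2 μ) (hX0 : ∀ᵐ ω ∂μ, 0 ≤ X ω) (hε : 0 < ε) :
    ∫ ω, (X ω + ε)⁻¹ ∂μ =
      (μ[X] + ε)⁻¹ + (∫ ω, (X ω - μ[X]) ^ 2 / (X ω + ε) ∂μ) / (μ[X] + ε) ^ 2 := by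
  set b := μ[X]
  have hb : 0 ≤ b := integral_nonneg_of_ae hX0
  have hX1 : Integrable X μ := hX.integrable one_le_two
  have hsq : Integrable (fun ω => (X ω - b) ^ 2) μ := (hX.sub (memLp_const b)).integrable_sq
  have hrem : Integrable (fun ω => (X ω - b) ^ 2 / (X ω + ε)) μ := by
    refine (hsq.div_const ε).mono' ?_ ?_
    · exact (hsq.aestronglyMeasurable.aemeasurable.div
        (hX1.aestronglyMeasurable.aemeasurable.add_const ε)).aestronglyMeasurable
    · filter_upwards [hX0] with ω hω
      rw [Real.norm_of_nonneg (by positivity)]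
      exact div_le_div_of_nonneg_left (sq_nonneg _) hε (by linarith)
  have hlin : Integrable (fun ω => (X ω - b) / (b + ε) ^ 2) μ :=
    (hX1.sub (integrable_const b)).div_const _
  have hcentered : ∫ ω, (X ω - b) / (b + ε) ^ 2 ∂μ = 0 := by
    rw [integral_div, integral_sub hX1 (integrable_const b)]
    simp [b]
  calc ∫ ω, (X ω + ε)⁻¹ ∂μ
      = ∫ ω, (b + ε)⁻¹ - (X ω - b) / (b + ε) ^ 2 + (X ω - b) ^ 2 / (X ω + ε) / (b + ε) ^ 2 ∂μ := by
        refine integral_congr_ae ?_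
        filter_upwards [hX0] with ω hω
        exact inv_add_eq_taylor (by positivity) (by positivity)
    _ = _ := by
        have hmain : Integrable (fun ω => (b + ε)⁻¹ - (X ω - b) / (b + ε) ^ 2) μ :=
          (integrable_const _).sub hlin
        rw [integral_add hmain (hrem.div_const _),
          integral_sub (integrable_const _) hlin, hcentered, integral_const, integral_div]
        simp

lemma integral_sq_sub_div_add_le_variance_div (hX : MemLp X 2 μ) (hX0 : ∀ᵐ ω ∂μ, 0 ≤ X ω)
    (hε : 0 < ε) :
    ∫ ω, (X ω - μ[X]) ^ 2 / (X ω + ε) ∂μ ≤ variance X μ / ε := by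
  have hsq : Integrable (fun ω => (X ω - μ[X]) ^ 2) μ := (hX.sub (memLp_const _)).integrable_sq
  rw [variance_eq_integral hX.aestronglyMeasurable.aemeasurable, ← integral_div]
  refine integral_mono_of_nonneg ?_ (hsq.div_const ε) ?_
  · filter_upwards [hX0] with ω hω
    positivity
  · filter_upwards [hX0] with ω hω
    exact div_le_div_of_nonneg_left (sq_nonneg _) hε (by linarith)

lemma abs_integral_inv_add_sub_inv_integral_le (hX : MemLp X 2 μ) (hX0 : ∀ᵐ ω ∂μ, 0 ≤ X ω)
    (hε : 0 < ε) (hmean : 0 < μ[X]) :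
    |∫ ω, (X ω + ε)⁻¹ ∂μ - (μ[X])⁻¹| ≤ (variance X μ / ε + ε) / μ[X] ^ 2 := by
  rw [integral_inv_add_eq hX hX0 hε]
  set b := μ[X]
  set R := ∫ ω, (X ω - b) ^ 2 / (X ω + ε) ∂μ
  have hR0 : 0 ≤ R := integral_nonneg_of_ae (by filter_upwards [hX0] with ω hω; positivity)
  have hR : R ≤ variance X μ / ε := integral_sq_sub_div_add_le_variance_div hX hX0 hε
  have hgap : (b + ε)⁻¹ - b⁻¹ = -(ε / (b * (b + ε))) := by field_simp; ring
  have hgap_le : ε / (b * (b + ε)) ≤ ε / b ^ 2 :=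
    div_le_div_of_nonneg_left hε.le (by positivity) (by nlinarith)
  have hVε : 0 ≤ variance X μ / ε := div_nonneg (variance_nonneg X μ) hε.le
  have hrem_le : R / (b + ε) ^ 2 ≤ variance X μ / ε / b ^ 2 :=
    div_le_div₀ hVε hR (by positivity) (by gcongr; linarith)
  have hrem0 : 0 ≤ R / (b + ε) ^ 2 := by positivity
  have hgap0 : 0 ≤ ε / (b * (b + ε)) := by positivity
  have hV : 0 ≤ variance X μ / ε / b ^ 2 := by positivity
  rw [add_div, abs_le]
  constructor <;> linarith

lemma abs_integral_div_add_sub_div_integral_le (hX : MemLp X 2 μ) (hX0 : ∀ᵐ ω ∂μ, 0 ≤ X ω)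
    (hε : 0 < ε) {s c C : ℝ} (hs : 0 < s) (hc : 0 < c) (hmean : c * s ≤ μ[X])
    (hvar : variance X μ ≤ C * s) :
    |∫ ω, s / (X ω + ε) ∂μ - s / μ[X]| ≤ (C / ε + ε / s) / c ^ 2 := by
  have hb : 0 < μ[X] := lt_of_lt_of_le (by positivity) hmean
  have hCs : 0 ≤ C * s / ε + ε := by
    have hCs0 : 0 ≤ C * s := (variance_nonneg X μ).trans hvar
    positivity
  calc |∫ ω, s / (X ω + ε) ∂μ - s / μ[X]|
      = s * |∫ ω, (X ω + ε)⁻¹ ∂μ - (μ[X])⁻¹| := by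
        simp_rw [div_eq_mul_inv, integral_const_mul, ← mul_sub, abs_mul, abs_of_pos hs]
    _ ≤ s * ((variance X μ / ε + ε) / μ[X] ^ 2) := by
        gcongr
        exact abs_integral_inv_add_sub_inv_integral_le hX hX0 hε hb
    _ ≤ s * ((C * s / ε + ε) / (c * s) ^ 2) := by
        gcongr
    _ = (C / ε + ε / s) / c ^ 2 := by
        field_simp

end InverseMoment

lemma tendsto_const_div_rpow_add_rpow_div_self (C : ℝ) {a : ℝ} (ha0 : 0 < a) (ha1 : a < 1) :
    Tendsto (fun x : ℝ => C / x ^ a + x ^ a / x) atTop (𝓝 0) := by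
  have hfirst : Tendsto (fun x : ℝ => C / x ^ a) atTop (𝓝 0) :=
    tendsto_const_nhds.div_atTop (tendsto_rpow_atTop ha0)
  have hsecond : Tendsto (fun x : ℝ => x ^ a / x) atTop (𝓝 0) := by
    refine (tendsto_rpow_neg_atTop (sub_pos.2 ha1)).congr' ?_
    filter_upwards [eventually_gt_atTop 0] with x hx
    rw [neg_sub, Real.rpow_sub_one hx.ne']
  simpa using hfirst.add hsecond

theorem regularized_inverse_moment_limit_general
    {Ω : Type*} [MeasurableSpace Ω] (μ : Measure Ω) [IsProbabilityMeasure μ]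
    (m : ℕ → Ω → ℝ) (hmeas : ∀ M, Measurable (m M))
    (hbound : ∀ M : ℕ, ∀ᵐ ω ∂μ, 0 ≤ m M ω ∧ m M ω ≤ M)
    (c₁ c₂ : ℝ) (hc₁ : 0 < c₁)
    (M₀ : ℕ) (hmean : ∀ M ≥ M₀,
      c₁ * M ≤ ∫ ω, m M ω ∂μ ∧ ∫ ω, m M ω ∂μ ≤ c₂ * M)
    (C : ℝ) (hvar : ∀ M ≥ M₀, variance (m M) μ ≤ C * M)
    (L : ℝ) (hL : Tendsto (fun M : ℕ => (M : ℝ) / ∫ ω, m M ω ∂μ) atTop (𝓝 L)) :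
    Tendsto (fun M : ℕ => ∫ ω, (M : ℝ) / (m M ω + (M : ℝ) ^ ((5:ℝ) / 6)) ∂μ)
      atTop (𝓝 L) := by
  have hclose : ∀ᶠ M : ℕ in atTop,
      ‖∫ ω, (M : ℝ) / (m M ω + (M : ℝ) ^ ((5:ℝ) / 6)) ∂μ - (M : ℝ) / ∫ ω, m M ω ∂μ‖ ≤
        (C / (M : ℝ) ^ ((5:ℝ) / 6) + (M : ℝ) ^ ((5:ℝ) / 6) / M) / c₁ ^ 2 := by
    filter_upwards [eventually_ge_atTop (max M₀ 1)] with M hM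
    have hMpos : (0 : ℝ) < M := by exact_mod_cast (le_of_max_le_right hM)
    have hL2 : MemLp (m M) 2 μ := MemLp.of_bound (hmeas M).aestronglyMeasurable M <| by
      filter_upwards [hbound M] with ω hω
      exact (Real.norm_of_nonneg hω.1).trans_le hω.2
    exact abs_integral_div_add_sub_div_integral_le hL2 ((hbound M).mono fun _ hω => hω.1)
      (Real.rpow_pos_of_pos hMpos _) hMpos hc₁ (hmean M (le_of_max_le_left hM)).1
      (hvar M (le_of_max_le_left hM))
  have herror : Tendsto (fun M : ℕ =>
      (C / (M : ℝ) ^ ((5:ℝ) / 6) + (M : ℝ) ^ ((5:ℝ) / 6) / M) / c₁ ^ 2) atTop (𝓝 0) := by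
    simpa using ((tendsto_const_div_rpow_add_rpow_div_self C (by norm_num) (by norm_num)).comp
      tendsto_natCast_atTop_atTop).div_const (c₁ ^ 2)
  simpa using hL.add (squeeze_zero_norm' hclose herror)

/-- Let `m̃_M` be random variables with `0 ≤ m̃_M ≤ M` a.s., `E[m̃_M] = Θ(M)` and
`Var(m̃_M) = O(M)`, and let `ε_M = M^{5/6}`.  Then
`lim_{M→∞} E[M/(m̃_M + ε_M)] = lim_{M→∞} M/E[m̃_M]`, provided the latter limit exists. -/
theorem regularized_inverse_moment_limit
    {Ω : Type*} [MeasurableSpace Ω] (μ : Measure Ω) [IsProbabilityMeasure μ]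
    (m : ℕ → Ω → ℝ) (hmeas : ∀ M, Measurable (m M))
    (hbound : ∀ M : ℕ, ∀ᵐ ω ∂μ, 0 ≤ m M ω ∧ m M ω ≤ M)
    (c₁ c₂ : ℝ) (hc₁ : 0 < c₁) (hc₁₂ : c₁ ≤ c₂)
    (M₀ : ℕ) (hmean : ∀ M ≥ M₀,
      c₁ * M ≤ ∫ ω, m M ω ∂μ ∧ ∫ ω, m M ω ∂μ ≤ c₂ * M)
    (C : ℝ) (hvar : ∀ M ≥ M₀, variance (m M) μ ≤ C * M)
    (L : ℝ) (hL : Tendsto (fun M : ℕ => (M : ℝ) / ∫ ω, m M ω ∂μ) atTop (𝓝 L)) :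
    Tendsto (fun M : ℕ => ∫ ω, (M : ℝ) / (m M ω + (M : ℝ) ^ ((5:ℝ) / 6)) ∂μ)
      atTop (𝓝 L) :=
  regularized_inverse_moment_limit_general μ m hmeas hbound c₁ c₂ hc₁ M₀ hmean C hvar L hL
end

section
/- Let m̃ be binomial with M trials and success probability p ∈ (0,1], and ε_M = M^{5/6}. Then lim_{M→∞} E[M/(m̃ + ε_M)] = 1/p. -/
open Filter Topology
open scoped unitInterval

/-! Expanding `a⁻¹` around `a = μ` gives `a⁻¹ = μ⁻¹ - (a - μ) / μ ^ 2 + (a - μ) ^ 2 / (a * μ ^ 2)`.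
For `a = X + ε` with `X ≥ 0` the last term lies in `[0, (a - μ) ^ 2 / (ε * μ ^ 2)]`, so taking
expectations with `μ = E[X]` gives `-ε / μ ^ 2 ≤ E[(X + ε)⁻¹] - μ⁻¹ ≤ Var X / (ε * μ ^ 2)`.
Apply this to `X = m̃ / M`, which has mean `p` and variance `p (1 - p) / M` (the Bernstein
polynomial moments), and `ε = ε_M / M`: since `M / (m̃ + ε_M) = (X + ε)⁻¹`, the error is
`O(ε_M / M + 1 / ε_M) = O(M ^ (-1/6))`. -/

theorem inv_mem_Icc_tangent_line {a μ ε : ℝ} (hμ : 0 < μ) (hε : 0 < ε) (ha : ε ≤ a) :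
    a⁻¹ ∈ Set.Icc (μ⁻¹ - (a - μ) / μ ^ 2)
      (μ⁻¹ - (a - μ) / μ ^ 2 + (a - μ) ^ 2 / (ε * μ ^ 2)) := by
  have ha0 : 0 < a := hε.trans_le ha
  have hexpand : a⁻¹ = μ⁻¹ - (a - μ) / μ ^ 2 + (a - μ) ^ 2 / (a * μ ^ 2) := by
    field_simp
    ring
  rw [hexpand]
  constructor
  · have : 0 ≤ (a - μ) ^ 2 / (a * μ ^ 2) := by positivity
    linarith
  · gcongr

open Finset in
theorem sum_inv_add_mul_sub_inv_mem_Icc {ι : Type*} (s : Finset ι) {w X : ι → ℝ} {μ V ε : ℝ}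
    (hw : ∀ i ∈ s, 0 ≤ w i) (hX : ∀ i ∈ s, 0 ≤ X i) (hμ : 0 < μ) (hε : 0 < ε)
    (hsum : ∑ i ∈ s, w i = 1) (hmean : ∑ i ∈ s, X i * w i = μ)
    (hvar : ∑ i ∈ s, (μ - X i) ^ 2 * w i = V) :
    ∑ i ∈ s, (X i + ε)⁻¹ * w i - μ⁻¹ ∈ Set.Icc (-(ε / μ ^ 2)) (V / (ε * μ ^ 2)) := by
  have hshift_sq : ∑ i ∈ s, (X i + ε - μ) ^ 2 * w i = V + ε ^ 2 := by
    have (i : ι) : (X i + ε - μ) ^ 2 * w i =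
        (μ - X i) ^ 2 * w i + 2 * ε * (X i * w i) + (ε ^ 2 - 2 * ε * μ) * w i := by ring
    simp only [this, sum_add_distrib, ← mul_sum, hsum, hmean, hvar]
    ring
  have hbounds (i : ι) (hi : i ∈ s) :=
    inv_mem_Icc_tangent_line hμ hε (le_add_of_nonneg_left (hX i hi))
  have lower := sum_le_sum fun i hi => mul_le_mul_of_nonneg_right (hbounds i hi).1 (hw i hi)
  have upper := sum_le_sum fun i hi => mul_le_mul_of_nonneg_right (hbounds i hi).2 (hw i hi)
  simp only [add_mul, sub_mul, div_mul_eq_mul_div, sum_add_distrib, sum_sub_distrib, ← sum_div,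
    ← mul_sum, hsum, hmean, hshift_sq, mul_one, add_sub_cancel_left] at lower upper
  have : (V + ε ^ 2) / (ε * μ ^ 2) = V / (ε * μ ^ 2) + ε / μ ^ 2 := by field_simp
  constructor <;> linarith

theorem bernstein.mean {n : ℕ} (hn : n ≠ 0) (x : I) :
    ∑ k : Fin (n + 1), (bernstein.z k : ℝ) * bernstein n k x = x := by
  have h := bernsteinPolynomial.sum_smul ℝ n
  apply_fun fun p => Polynomial.aeval (x : ℝ) p at h
  simp only [nsmul_eq_mul, Finset.sum_range, map_sum, Polynomial.coe_aeval_eq_eval,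
    Polynomial.eval_mul, Polynomial.eval_natCast, Polynomial.eval_X, bernstein.z, bernstein,
    Polynomial.toContinuousMapOn_apply, Polynomial.toContinuousMap_apply, div_mul_eq_mul_div,
    ← Finset.sum_div] at h ⊢
  rw [h]
  field_simp

theorem abs_sum_bernstein_mul_div_add_sub_inv_le {n : ℕ} (hn : n ≠ 0) {x : I} (hx : 0 < (x : ℝ))
    {ε : ℝ} (hε : 0 < ε) :
    |∑ k : Fin (n + 1), bernstein n k x * (n / ((k : ℕ) + ε)) - (x : ℝ)⁻¹| ≤
      (ε / n + x * (1 - x) / ε) / (x : ℝ) ^ 2 := by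
  have hn' : (0 : ℝ) < n := by positivity
  have hrescale (k : Fin (n + 1)) :
      bernstein n k x * (n / ((k : ℕ) + ε)) =
        ((bernstein.z k : ℝ) + ε / n)⁻¹ * bernstein n k x := by
    rw [mul_comm, bernstein.z, Subtype.coe_mk, ← add_div, inv_div]
  obtain ⟨hlow, hup⟩ := sum_inv_add_mul_sub_inv_mem_Icc Finset.univ (fun _ _ => bernstein_nonneg)
    (fun k _ => (bernstein.z k).2.1) hx (div_pos hε hn') (bernstein.probability n x)
    (bernstein.mean hn x) (bernstein.variance hn x)
  have hvar_eq :
      (x : ℝ) * (1 - x) / n / (ε / n * (x : ℝ) ^ 2) = x * (1 - x) / ε / (x : ℝ) ^ 2 := by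
    field_simp
  have hvar_nonneg : 0 ≤ (x : ℝ) * (1 - x) / ε / (x : ℝ) ^ 2 := by
    have : (0 : ℝ) ≤ 1 - x := unitInterval.one_minus_nonneg x
    positivity
  have hshift_nonneg : 0 ≤ ε / n / (x : ℝ) ^ 2 := by positivity
  rw [hvar_eq] at hup
  rw [Finset.sum_congr rfl fun k _ => hrescale k, abs_le, add_div]
  constructor <;> linarith

theorem tendsto_sum_bernstein_mul_div_add {x : I} (hx : 0 < (x : ℝ)) {ε : ℕ → ℝ}
    (hε : Tendsto ε atTop atTop) (hε_div : Tendsto (fun n => ε n / n) atTop (𝓝 0)) :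
    Tendsto (fun n : ℕ => ∑ k : Fin (n + 1), bernstein n k x * (n / ((k : ℕ) + ε n)))
      atTop (𝓝 (x : ℝ)⁻¹) := by
  rw [tendsto_iff_norm_sub_tendsto_zero]
  have hbound :
      Tendsto (fun n => (ε n / n + x * (1 - x) / ε n) / (x : ℝ) ^ 2) atTop (𝓝 0) := by
    simpa using (hε_div.add (tendsto_const_nhds.div_atTop hε)).div_const ((x : ℝ) ^ 2)
  refine squeeze_zero' (Eventually.of_forall fun _ => norm_nonneg _) ?_ hbound
  filter_upwards [eventually_ne_atTop 0, hε.eventually_gt_atTop 0] with n hn hεn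
  exact abs_sum_bernstein_mul_div_add_sub_inv_le hn hx hεn

theorem tendsto_natCast_rpow_div_self {r : ℝ} (hr : r < 1) :
    Tendsto (fun n : ℕ => (n : ℝ) ^ r / n) atTop (𝓝 0) := by
  refine ((tendsto_rpow_neg_atTop (sub_pos.2 hr)).comp tendsto_natCast_atTop_atTop).congr' ?_
  filter_upwards [eventually_ne_atTop 0] with n hn
  simp [neg_sub, Real.rpow_sub_one (Nat.cast_ne_zero.2 hn)]

theorem PMF.toReal_binomial_eq_bernstein {q : NNReal} (hq : q ≤ 1) (n : ℕ) (k : Fin (n + 1)) :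
    (PMF.binomial q hq n k).toReal = bernstein n k ⟨q, q.2, hq⟩ := by
  rw [PMF.binomial_apply, bernstein_apply]
  simp only [Fin.val_last, ENNReal.toReal_mul, ENNReal.toReal_pow, ENNReal.coe_toReal,
    ENNReal.toReal_sub_of_le (ENNReal.coe_le_one_iff.2 hq) ENNReal.one_ne_top, ENNReal.toReal_one,
    ENNReal.toReal_natCast]
  ring

/-- For `m̃` binomial with `M` trials and success probability `p ∈ (0,1]`, and
`ε_M = M^{5/6}`, we have `lim_{M→∞} E[M/(m̃ + ε_M)] = 1/p`. -/
theorem binomial_regularized_inverse_moment_limit (p : ℝ) (hp0 : 0 < p) (hp1 : p ≤ 1) :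
    Tendsto
      (fun M : ℕ =>
        ∑ k : Fin (M + 1),
          ((PMF.binomial (Real.toNNReal p) (by simpa using hp1) M) k).toReal *
            ((M : ℝ) / ((k : ℕ) + (M : ℝ) ^ ((5:ℝ) / 6))))
      atTop (𝓝 (1 / p)) := by
  have hx :
      (⟨Real.toNNReal p, (Real.toNNReal p).2, by simpa using hp1⟩ : I) = ⟨p, hp0.le, hp1⟩ :=
    Subtype.ext (Real.coe_toNNReal p hp0.le)
  simp only [PMF.toReal_binomial_eq_bernstein, hx, one_div]
  exact tendsto_sum_bernstein_mul_div_add (x := ⟨p, hp0.le, hp1⟩) hp0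
    ((tendsto_rpow_atTop (by norm_num)).comp tendsto_natCast_atTop_atTop)
    (tendsto_natCast_rpow_div_self (by norm_num))
end

section
/- Let {Q_k}_{k=1}^M be Pauli measurements, and for each Pauli string P_j in O = ∑_j a_j P_j let m_{jℓ} = #{k : P_j ⊳ Q_k and P_ℓ ⊳ Q_k}, with m_j = m_{jj} > 0. Define the estimator ⟨O⟩~ = ∑_j a_j (1/m_j) ∑_{k: P_j⊳Q_k} μ(P_j, x̃_k), where the outcomes x̃_k of independent measurements satisfy E[μ(P_j,x̃_k)] = ⟨P_j⟩ and E[μ(P_j,x̃_k)μ(P_ℓ,x̃_k)] = ⟨P_jP_ℓ⟩ whenever Q_k covers both P_j and P_ℓ. Then Var(⟨O⟩~) = ∑_{j,ℓ} a_j a_ℓ (m_{jℓ}/(m_{jj} m_{ℓℓ})) (⟨P_jP_ℓ⟩ − ⟨P_j⟩⟨P_ℓ⟩). -/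
/-!
The estimator is `∑ j (a j / m j j) S j` with `S j = ∑_{k : P_j ⊳ Q_k} μ(P_j, x̃_k)`.
Expanding the variance bilinearly reduces it to `Cov(S j, S l)`; since distinct measurements
are independent, only the `m j l` measurements covering both `P_j` and `P_l` contribute, each
with `⟨P_j P_l⟩ - ⟨P_j⟩⟨P_l⟩`.
-/

open MeasureTheory ProbabilityTheory

namespace ProbabilityTheory

variable {Ω ι κ : Type*} [MeasurableSpace Ω] {μ : Measure Ω}

lemma variance_fun_sum_const_mul [IsFiniteMeasure μ] [Fintype ι] (b : ι → ℝ)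
    {X : ι → Ω → ℝ} (hX : ∀ i, MemLp (X i) 2 μ) :
    Var[fun ω ↦ ∑ i, b i * X i ω; μ] = ∑ i, ∑ i', b i * b i' * cov[X i, X i'; μ] := by
  have hbX : ∀ i, MemLp (fun ω ↦ b i * X i ω) 2 μ := fun i ↦ (hX i).const_mul (b i)
  rw [← covariance_self (memLp_finsetSum _ fun i _ ↦ hbX i).aemeasurable,
    covariance_fun_sum_fun_sum hbX hbX]
  simp only [covariance_const_mul_left, covariance_const_mul_right]
  exact Finset.sum_congr rfl fun i _ ↦ Finset.sum_congr rfl fun i' _ ↦ by ring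

lemma iIndepFun.covariance_apply_eq_zero {V : ι → Ω → κ → ℝ} (hV : iIndepFun V μ)
    {k k' : ι} (hkk' : k ≠ k') (i i' : κ) (hk : MemLp (fun ω ↦ V k ω i) 2 μ)
    (hk' : MemLp (fun ω ↦ V k' ω i') 2 μ) :
    cov[fun ω ↦ V k ω i, fun ω ↦ V k' ω i'; μ] = 0 :=
  ((hV.indepFun hkk').comp (measurable_pi_apply i)
    (measurable_pi_apply i')).covariance_eq_zero hk hk'

lemma iIndepFun.covariance_fun_sum_fun_sum_apply [IsFiniteMeasure μ] [DecidableEq ι]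
    {V : ι → Ω → κ → ℝ} (hV : iIndepFun V μ) (hmem : ∀ k i, MemLp (fun ω ↦ V k ω i) 2 μ)
    (s t : Finset ι) (i i' : κ) :
    cov[fun ω ↦ ∑ k ∈ s, V k ω i, fun ω ↦ ∑ k ∈ t, V k ω i'; μ] =
      ∑ k ∈ s ∩ t, cov[fun ω ↦ V k ω i, fun ω ↦ V k ω i'; μ] := by
  rw [covariance_fun_sum_fun_sum' (fun k _ ↦ hmem k i) (fun k _ ↦ hmem k i'),
    ← Finset.sum_filter_add_sum_filter_not s (· ∈ t), Finset.filter_mem_eq_inter]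
  have hdiag : ∀ k ∈ s ∩ t, ∑ k' ∈ t, cov[fun ω ↦ V k ω i, fun ω ↦ V k' ω i'; μ] =
      cov[fun ω ↦ V k ω i, fun ω ↦ V k ω i'; μ] := fun k hk ↦
    Finset.sum_eq_single_of_mem k (Finset.mem_inter.1 hk).2 fun k' _ hk'k ↦
      hV.covariance_apply_eq_zero (Ne.symm hk'k) i i' (hmem k i) (hmem k' i')
  have hoff : ∀ k ∈ s.filter (· ∉ t),
      ∑ k' ∈ t, cov[fun ω ↦ V k ω i, fun ω ↦ V k' ω i'; μ] = 0 := fun k hk ↦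
    Finset.sum_eq_zero fun k' hk' ↦ hV.covariance_apply_eq_zero
      (by rintro rfl; exact (Finset.mem_filter.1 hk).2 hk') i i' (hmem k i) (hmem k' i')
  rw [Finset.sum_congr rfl hdiag, Finset.sum_eq_zero hoff, add_zero]

end ProbabilityTheory

/-- `cover j k` encodes the qubit-wise covering relation `P_j ⊳ Q_k`, `Y j k ω = μ(P_j, x̃_k)` is
the one-shot estimate of `⟨P_j⟩` from the `k`-th measurement outcome, `e j = ⟨P_j⟩` and
`c j ℓ = ⟨P_j P_ℓ⟩`. -/
theorem variance_of_term_estimator_general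
    {Ω : Type*} [MeasurableSpace Ω] (μ : Measure Ω) [IsProbabilityMeasure μ]
    (J M : ℕ) (cover : Fin J → Fin M → Prop) [∀ j k, Decidable (cover j k)]
    (a : Fin J → ℝ) (Y : Fin J → Fin M → Ω → ℝ)
    (hYmeas : ∀ j k, Measurable (Y j k))
    (hYbound : ∀ j k ω, |Y j k ω| ≤ 1)
    (hindep : iIndepFun (m := fun _ : Fin M => (inferInstance : MeasurableSpace (Fin J → ℝ)))
      (fun k ω j => Y j k ω) μ)
    (e : Fin J → ℝ) (he : ∀ j k, cover j k → ∫ ω, Y j k ω ∂μ = e j)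
    (c : Fin J → Fin J → ℝ)
    (hc : ∀ j l k, cover j k → cover l k → ∫ ω, Y j k ω * Y l k ω ∂μ = c j l)
    (m : Fin J → Fin J → ℕ)
    (hm : ∀ j l, m j l = (Finset.univ.filter (fun k => cover j k ∧ cover l k)).card) :
    variance
      (fun ω => ∑ j, a j * ((1 / (m j j : ℝ)) *
        ∑ k ∈ Finset.univ.filter (fun k => cover j k), Y j k ω)) μ =
    ∑ j, ∑ l, a j * a l * ((m j l : ℝ) / ((m j j : ℝ) * (m l l : ℝ))) *
      (c j l - e j * e l) := by
  have hmem : ∀ j k, MemLp (Y j k) 2 μ := fun j k ↦ MemLp.of_bound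
    (hYmeas j k).aestronglyMeasurable 1 (ae_of_all _ (hYbound j k))
  have hcov : ∀ j l k, cover j k → cover l k → cov[Y j k, Y l k; μ] = c j l - e j * e l :=
    fun j l k hj hl ↦ by
      rw [covariance_eq_sub (hmem j k) (hmem l k), ← he j k hj, ← he l k hl, ← hc j l k hj hl]
      rfl
  set S : Fin J → Ω → ℝ := fun j ω ↦ ∑ k ∈ Finset.univ.filter (cover j), Y j k ω
  have hcovS : ∀ j l, cov[S j, S l; μ] = m j l * (c j l - e j * e l) := fun j l ↦ by
    rw [hindep.covariance_fun_sum_fun_sum_apply (fun k j ↦ hmem j k), ← Finset.filter_and,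
      Finset.sum_congr rfl fun k hk ↦ hcov j l k (Finset.mem_filter.1 hk).2.1
        (Finset.mem_filter.1 hk).2.2, Finset.sum_const, nsmul_eq_mul, hm]
  calc _ = ∑ j, ∑ l,
        a j * (1 / (m j j : ℝ)) * (a l * (1 / (m l l : ℝ))) * cov[S j, S l; μ] := by
        simpa only [mul_assoc] using
          variance_fun_sum_const_mul (fun j ↦ a j * (1 / (m j j : ℝ))) fun j ↦
            memLp_finsetSum _ fun k _ ↦ hmem j k
    _ = _ := Finset.sum_congr rfl fun j _ ↦ Finset.sum_congr rfl fun l _ ↦ by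
        rw [hcovS]; ring

/-- Variance of the term-by-term observable estimator.  Here `cover j k` encodes the
qubit-wise covering relation `P_j ⊳ Q_k`, `Y j k ω = μ(P_j, x̃_k)` is the one-shot
estimate of `⟨P_j⟩` from the `k`-th measurement outcome, measurements with different `k`
are independent, `e j = ⟨P_j⟩` and `c j ℓ = ⟨P_j P_ℓ⟩` are the true moments, and
`m j ℓ = #{k : P_j ⊳ Q_k ∧ P_ℓ ⊳ Q_k}`. -/
theorem variance_of_term_estimator
    {Ω : Type*} [MeasurableSpace Ω] (μ : Measure Ω) [IsProbabilityMeasure μ]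
    (J M : ℕ) (cover : Fin J → Fin M → Prop) [∀ j k, Decidable (cover j k)]
    (a : Fin J → ℝ) (Y : Fin J → Fin M → Ω → ℝ)
    (hYmeas : ∀ j k, Measurable (Y j k))
    (hYbound : ∀ j k ω, |Y j k ω| ≤ 1)
    (hindep : iIndepFun (m := fun _ : Fin M => (inferInstance : MeasurableSpace (Fin J → ℝ)))
      (fun k ω j => Y j k ω) μ)
    (e : Fin J → ℝ) (he : ∀ j k, cover j k → ∫ ω, Y j k ω ∂μ = e j)
    (c : Fin J → Fin J → ℝ)
    (hc : ∀ j l k, cover j k → cover l k → ∫ ω, Y j k ω * Y l k ω ∂μ = c j l)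
    (m : Fin J → Fin J → ℕ)
    (hm : ∀ j l, m j l = (Finset.univ.filter (fun k => cover j k ∧ cover l k)).card)
    (hmpos : ∀ j, 0 < m j j) :
    variance
      (fun ω => ∑ j, a j * ((1 / (m j j : ℝ)) *
        ∑ k ∈ Finset.univ.filter (fun k => cover j k), Y j k ω)) μ =
    ∑ j, ∑ l, a j * a l * ((m j l : ℝ) / ((m j j : ℝ) * (m l l : ℝ))) *
      (c j l - e j * e l) :=
  variance_of_term_estimator_general μ J M cover a Y hYmeas hYbound hindep e he c hc m hm
end
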